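/- Let n ≥ 1 be an integer, τ ∈ ℂ with Im τ > 0, and λ, κ ∈ ℂ with ϑ₁(κ,τ) ≠ 0. Define operators on functions F : ℂ² → ℂ by ((S⊗1)F)(z₁,z₂) = e^{πi(n−1)/n} F(z₁+1/n, z₂), ((S⊗1)⁻¹F)(z₁,z₂) = e^{−πi(n−1)/n} F(z₁−1/n, z₂), ((T⊗1)F)(z₁,z₂) = e^{πiτ/n − 2πiz₁} F(z₁−τ/n, z₂), and ((T⊗1)⁻¹F)(z₁,z₂) = e^{πiτ/n + 2πiz₁} F(z₁+τ/n, z₂). Then the twisted elliptic Shibukawa–Ueno operator has the following quasi-double periodicity in the spectral parameter: for every function F : ℂ² → ℂ, (1) (𝓡_{λ+1} F)(z₁,z₂) = −((S⊗1)⁻¹(𝓡_λ((S⊗1)F)))(z₁,z₂) at every point where ϑ₁(z₁−z₂−(λ+1+κ)/n, τ) ≠ 0, and (2) (𝓡_{λ+τ} F)(z₁,z₂) = e^{−2πi(ξ+λ)}·((T⊗1)(𝓡_λ((T⊗1)⁻¹F)))(z₁,z₂) with ξ = −κ/n + τ/2 + 1/2, at every point where ϑ₁(z₁−z₂−(λ+τ+κ)/n,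 τ) ≠ 0. -/
import Mathlib


open Complex

/-- Jacobi's first theta function
`ϑ₁(z,τ) = −∑_{m∈ℤ} exp(πi(m+1/2)²τ + 2πi(m+1/2)(z+1/2))` (here `theta1 τ z = ϑ₁(z,τ)`). -/
noncomputable def theta1 (τ z : ℂ) : ℂ :=
  -∑' m : ℤ, Complex.exp ((Real.pi : ℂ) * Complex.I * ((m : ℂ) + 1 / 2) ^ 2 * τ +
    2 * (Real.pi : ℂ) * Complex.I * ((m : ℂ) + 1 / 2) * (z + 1 / 2))

/-- The twisted elliptic Shibukawa–Ueno operator `𝓡_λ` (with parameters `n`, `τ`, `λ`, `κ`),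
applied to a function `F : ℂ² → ℂ` and evaluated at `(z₁, z₂)`:
`(𝓡_λF)(z₁,z₂) = [ϑ₁′(0)ϑ₁(u+λ)/ϑ₁(u)]·F(z₂+λ/n, z₁−λ/n)
  − [ϑ₁(λ)ϑ₁′(0)ϑ₁(u+κ)/(ϑ₁(u)ϑ₁(κ))]·F(z₁−κ/n, z₂+κ/n)`, `u = z₁−z₂−(λ+κ)/n`. -/
noncomputable def RopE (n : ℕ) (τ lam κ : ℂ) (F : ℂ × ℂ → ℂ) (z₁ z₂ : ℂ) : ℂ :=
  deriv (theta1 τ) 0 * theta1 τ ((z₁ - z₂ - (lam + κ) / (n : ℂ)) + lam) /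
      theta1 τ (z₁ - z₂ - (lam + κ) / (n : ℂ)) *
    F (z₂ + lam / (n : ℂ), z₁ - lam / (n : ℂ)) -
  theta1 τ lam * deriv (theta1 τ) 0 * theta1 τ ((z₁ - z₂ - (lam + κ) / (n : ℂ)) + κ) /
      (theta1 τ (z₁ - z₂ - (lam + κ) / (n : ℂ)) * theta1 τ κ) *
    F (z₁ - κ / (n : ℂ), z₂ + κ / (n : ℂ))

/-- `(S⊗1)F(z₁,z₂) = e^{πi(n−1)/n} F(z₁+1/n, z₂)`. -/
noncomputable def opS1 (n : ℕ) (F : ℂ × ℂ → ℂ) : ℂ × ℂ → ℂ := fun p =>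
  Complex.exp ((Real.pi : ℂ) * Complex.I * ((n : ℂ) - 1) / (n : ℂ)) *
    F (p.1 + 1 / (n : ℂ), p.2)

/-- `(S⊗1)⁻¹F(z₁,z₂) = e^{−πi(n−1)/n} F(z₁−1/n, z₂)`. -/
noncomputable def opS1inv (n : ℕ) (F : ℂ × ℂ → ℂ) : ℂ × ℂ → ℂ := fun p =>
  Complex.exp (-((Real.pi : ℂ) * Complex.I * ((n : ℂ) - 1) / (n : ℂ))) *
    F (p.1 - 1 / (n : ℂ), p.2)

/-- `(T⊗1)F(z₁,z₂) = e^{πiτ/n − 2πiz₁} F(z₁−τ/n, z₂)`. -/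
noncomputable def opT1 (n : ℕ) (τ : ℂ) (F : ℂ × ℂ → ℂ) : ℂ × ℂ → ℂ := fun p =>
  Complex.exp ((Real.pi : ℂ) * Complex.I * τ / (n : ℂ) -
      2 * (Real.pi : ℂ) * Complex.I * p.1) * F (p.1 - τ / (n : ℂ), p.2)

/-- `(T⊗1)⁻¹F(z₁,z₂) = e^{πiτ/n + 2πiz₁} F(z₁+τ/n, z₂)`. -/
noncomputable def opT1inv (n : ℕ) (τ : ℂ) (F : ℂ × ℂ → ℂ) : ℂ × ℂ → ℂ := fun p =>
  Complex.exp ((Real.pi : ℂ) * Complex.I * τ / (n : ℂ) +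
      2 * (Real.pi : ℂ) * Complex.I * p.1) * F (p.1 + τ / (n : ℂ), p.2)

lemma theta1_add_one (τ z : ℂ) : theta1 τ (z + 1) = -theta1 τ z := by
  unfold theta1
  rw [neg_neg, ← tsum_neg]
  apply tsum_congr
  intro m
  have h : (Real.pi : ℂ) * Complex.I * ((m : ℂ) + 1 / 2) ^ 2 * τ +
      2 * (Real.pi : ℂ) * Complex.I * ((m : ℂ) + 1 / 2) * (z + 1 + 1 / 2) =
      ((Real.pi : ℂ) * Complex.I * ((m : ℂ) + 1 / 2) ^ 2 * τ +
      2 * (Real.pi : ℂ) * Complex.I * ((m : ℂ) + 1 / 2) * (z + 1 / 2)) +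
      ((m : ℂ) * (2 * (Real.pi : ℂ) * Complex.I) + (Real.pi : ℂ) * Complex.I) := by ring
  rw [h, Complex.exp_add, Complex.exp_add, Complex.exp_add, Complex.exp_int_mul_two_pi_mul_I,
    Complex.exp_pi_mul_I]
  ring

lemma theta1_add_tau (τ z : ℂ) : theta1 τ (z + τ) =
    -Complex.exp (-((Real.pi : ℂ) * Complex.I * τ) - 2 * (Real.pi : ℂ) * Complex.I * z) *
      theta1 τ z := by
  set f : ℤ → ℂ := fun m => Complex.exp ((Real.pi : ℂ) * Complex.I * ((m : ℂ) + 1 / 2) ^ 2 * τ +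
    2 * (Real.pi : ℂ) * Complex.I * ((m : ℂ) + 1 / 2) * (z + 1 / 2)) with hf
  have key : ∀ m : ℤ, Complex.exp ((Real.pi : ℂ) * Complex.I * ((m : ℂ) + 1 / 2) ^ 2 * τ +
      2 * (Real.pi : ℂ) * Complex.I * ((m : ℂ) + 1 / 2) * (z + τ + 1 / 2)) =
      Complex.exp (-((Real.pi : ℂ) * Complex.I * τ) - 2 * (Real.pi : ℂ) * Complex.I * z
        - (Real.pi : ℂ) * Complex.I) * f (m + 1) := by
    intro m
    rw [hf]
    simp only
    rw [← Complex.exp_add]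
    congr 1
    push_cast
    ring
  unfold theta1
  rw [tsum_congr key, tsum_mul_left]
  have hre : ∑' m : ℤ, f (m + 1) = ∑' m : ℤ, f m := by
    exact (Equiv.addRight (1 : ℤ)).tsum_eq f
  rw [hre]
  have : Complex.exp (-((Real.pi : ℂ) * Complex.I * τ) - 2 * (Real.pi : ℂ) * Complex.I * z
      - (Real.pi : ℂ) * Complex.I) =
      Complex.exp (-((Real.pi : ℂ) * Complex.I * τ) - 2 * (Real.pi : ℂ) * Complex.I * z) *
        (Complex.exp ((Real.pi : ℂ) * Complex.I))⁻¹ := by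
    rw [← Complex.exp_neg, ← Complex.exp_add]; ring_nf
  rw [this, Complex.exp_pi_mul_I]
  simp only [hf]
  norm_num

/-- Quasi-double periodicity of the twisted elliptic Shibukawa–Ueno operator in
the spectral parameter: `𝓡_{λ+1} = −(S⊗1)⁻¹ 𝓡_λ (S⊗1)` and
`𝓡_{λ+τ} = e^{−2πi(ξ+λ)} (T⊗1) 𝓡_λ (T⊗1)⁻¹` with `ξ = −κ/n + τ/2 + 1/2`. -/
theorem RopE_quasi_periodicity (n : ℕ) (hn : 1 ≤ n) (τ : ℂ) (hτ : 0 < τ.im)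
    (lam κ : ℂ) (hκ : theta1 τ κ ≠ 0) (F : ℂ × ℂ → ℂ) :
    (∀ z₁ z₂ : ℂ, theta1 τ (z₁ - z₂ - (lam + 1 + κ) / (n : ℂ)) ≠ 0 →
      RopE n τ (lam + 1) κ F z₁ z₂ =
        -(opS1inv n (fun p => RopE n τ lam κ (opS1 n F) p.1 p.2) (z₁, z₂))) ∧
    (∀ z₁ z₂ : ℂ, theta1 τ (z₁ - z₂ - (lam + τ + κ) / (n : ℂ)) ≠ 0 →
      RopE n τ (lam + τ) κ F z₁ z₂ =
        Complex.exp (-2 * (Real.pi : ℂ) * Complex.I *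
            ((-κ / (n : ℂ) + τ / 2 + 1 / 2) + lam)) *
          opT1 n τ (fun p => RopE n τ lam κ (opT1inv n τ F) p.1 p.2) (z₁, z₂)) := by
  constructor
  · intro z₁ z₂ h
    simp only [RopE, opS1, opS1inv]
    rw [show z₁ - 1 / (n : ℂ) - z₂ - (lam + κ) / (n : ℂ)
        = z₁ - z₂ - (lam + 1 + κ) / (n : ℂ) from by ring]
    rw [show z₁ - z₂ - (lam + 1 + κ) / (n : ℂ) + (lam + 1)
        = (z₁ - z₂ - (lam + 1 + κ) / (n : ℂ) + lam) + 1 from by ring,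
      theta1_add_one, theta1_add_one]
    rw [show z₂ + lam / (n : ℂ) + 1 / (n : ℂ) = z₂ + (lam + 1) / (n : ℂ) from by ring]
    rw [show z₁ - 1 / (n : ℂ) - lam / (n : ℂ) = z₁ - (lam + 1) / (n : ℂ) from by ring]
    rw [show z₁ - 1 / (n : ℂ) - κ / (n : ℂ) + 1 / (n : ℂ) = z₁ - κ / (n : ℂ) from by ring]
    rw [Complex.exp_neg]
    have hne := Complex.exp_ne_zero ((Real.pi : ℂ) * Complex.I * ((n : ℂ) - 1) / (n : ℂ))
    field_simp
    ring
  · intro z₁ z₂ h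
    simp only [RopE, opT1, opT1inv]
    rw [show z₁ - τ / (n : ℂ) - z₂ - (lam + κ) / (n : ℂ)
        = z₁ - z₂ - (lam + τ + κ) / (n : ℂ) from by ring]
    rw [show z₁ - z₂ - (lam + τ + κ) / (n : ℂ) + (lam + τ)
        = (z₁ - z₂ - (lam + τ + κ) / (n : ℂ) + lam) + τ from by ring,
      theta1_add_tau, theta1_add_tau]
    rw [show z₂ + lam / (n : ℂ) + τ / (n : ℂ) = z₂ + (lam + τ) / (n : ℂ) from by ring]
    rw [show z₁ - τ / (n : ℂ) - lam / (n : ℂ) = z₁ - (lam + τ) / (n : ℂ) from by ring]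
    rw [show z₁ - τ / (n : ℂ) - κ / (n : ℂ) + τ / (n : ℂ) = z₁ - κ / (n : ℂ) from by ring]
    have hc1 : -Complex.exp (-((Real.pi : ℂ) * Complex.I * τ) -
          2 * (Real.pi : ℂ) * Complex.I * (z₁ - z₂ - (lam + τ + κ) / (n : ℂ) + lam)) =
        Complex.exp (-2 * (Real.pi : ℂ) * Complex.I *
            (-κ / (n : ℂ) + τ / 2 + 1 / 2 + lam)) *
          Complex.exp ((Real.pi : ℂ) * Complex.I * τ / (n : ℂ) -
            2 * (Real.pi : ℂ) * Complex.I * z₁) *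
          Complex.exp ((Real.pi : ℂ) * Complex.I * τ / (n : ℂ) +
            2 * (Real.pi : ℂ) * Complex.I * (z₂ + lam / (n : ℂ))) := by
      rw [show -((Real.pi : ℂ) * Complex.I * τ) -
          2 * (Real.pi : ℂ) * Complex.I * (z₁ - z₂ - (lam + τ + κ) / (n : ℂ) + lam)
        = (-2 * (Real.pi : ℂ) * Complex.I * (-κ / (n : ℂ) + τ / 2 + 1 / 2 + lam) +
            ((Real.pi : ℂ) * Complex.I * τ / (n : ℂ) - 2 * (Real.pi : ℂ) * Complex.I * z₁) +
            ((Real.pi : ℂ) * Complex.I * τ / (n : ℂ) +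
              2 * (Real.pi : ℂ) * Complex.I * (z₂ + lam / (n : ℂ)))) +
          (Real.pi : ℂ) * Complex.I from by ring,
        Complex.exp_add, Complex.exp_add, Complex.exp_add, Complex.exp_pi_mul_I]
      ring
    have hc2 : Complex.exp (-((Real.pi : ℂ) * Complex.I * τ) -
          2 * (Real.pi : ℂ) * Complex.I * lam) =
        -(Complex.exp (-2 * (Real.pi : ℂ) * Complex.I *
            (-κ / (n : ℂ) + τ / 2 + 1 / 2 + lam)) *
          Complex.exp ((Real.pi : ℂ) * Complex.I * τ / (n : ℂ) -
            2 * (Real.pi : ℂ) * Complex.I * z₁) *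
          Complex.exp ((Real.pi : ℂ) * Complex.I * τ / (n : ℂ) +
            2 * (Real.pi : ℂ) * Complex.I * (z₁ - τ / (n : ℂ) - κ / (n : ℂ)))) := by
      rw [show -((Real.pi : ℂ) * Complex.I * τ) - 2 * (Real.pi : ℂ) * Complex.I * lam
        = (-2 * (Real.pi : ℂ) * Complex.I * (-κ / (n : ℂ) + τ / 2 + 1 / 2 + lam) +
            ((Real.pi : ℂ) * Complex.I * τ / (n : ℂ) - 2 * (Real.pi : ℂ) * Complex.I * z₁) +
            ((Real.pi : ℂ) * Complex.I * τ / (n : ℂ) +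
              2 * (Real.pi : ℂ) * Complex.I * (z₁ - τ / (n : ℂ) - κ / (n : ℂ)))) +
          (Real.pi : ℂ) * Complex.I from by ring,
        Complex.exp_add, Complex.exp_add, Complex.exp_add, Complex.exp_pi_mul_I]
      ring
    rw [hc1, hc2]
    ring
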